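/- Let G : ℝ^k → ℝ be defined by G(x) = ∏_{i=1}^k g(x_i), where g is the standard Gaussian CDF. Then for every multi-index direction, the sum of absolute values of all first partial derivatives satisfies sup_{x ∈ ℝ^k} Σ_{i=1}^k |∂_i G(x)| ≤ C·√(log(k+1)) for some universal constant C. -/

import Mathlib

open Real MeasureTheory Set

/-- The standard Gaussian CDF. -/
noncomputable def gcdf (x : ℝ) : ℝ :=
  ∫ t in Set.Iio x, (1 / Real.sqrt (2 * Real.pi)) * Real.exp (-t ^ 2 / 2)

noncomputable def gpdf (t : ℝ) : ℝ := (1 / Real.sqrt (2 * Real.pi)) * Real.exp (-t ^ 2 / 2)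

lemma gpdf_eq (t : ℝ) : gpdf t = (1 / Real.sqrt (2 * Real.pi)) * Real.exp (-(1/2) * t ^ 2) := by
  unfold gpdf; rw [show -t^2/2 = -(1/2)*t^2 by ring]

lemma gpdf_nonneg (t : ℝ) : 0 ≤ gpdf t := by
  have h1 : (0:ℝ) ≤ 1 / Real.sqrt (2 * Real.pi) := by positivity
  exact mul_nonneg h1 (Real.exp_pos _).le

lemma integrable_gpdf : Integrable gpdf := by
  have h := (integrable_exp_neg_mul_sq (b := (1/2 : ℝ)) (by norm_num)).const_mul
    (1 / Real.sqrt (2 * Real.pi))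
  convert h using 1
  funext t; rw [gpdf_eq]

lemma integral_gpdf : ∫ t, gpdf t = 1 := by
  simp_rw [gpdf_eq]
  rw [MeasureTheory.integral_const_mul, integral_gaussian]
  rw [one_div, inv_mul_eq_div, div_eq_one_iff_eq (by positivity)]
  rw [show (2:ℝ) * π = π / (1/2) by ring]

lemma gcdf_eq (x : ℝ) : gcdf x = ∫ t in Set.Iio x, gpdf t := rfl

lemma gcdf_nonneg (x : ℝ) : 0 ≤ gcdf x := by
  rw [gcdf_eq]
  exact setIntegral_nonneg measurableSet_Iio fun t _ => gpdf_nonneg t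

lemma gcdf_mono : Monotone gcdf := by
  intro a b hab
  rw [gcdf_eq, gcdf_eq]
  exact setIntegral_mono_set integrable_gpdf.integrableOn
    (Filter.Eventually.of_forall gpdf_nonneg)
    (HasSubset.Subset.eventuallyLE (Iio_subset_Iio hab))

lemma gcdf_le_one (x : ℝ) : gcdf x ≤ 1 := by
  rw [gcdf_eq, ← integral_gpdf]
  exact setIntegral_le_integral integrable_gpdf
    (Filter.Eventually.of_forall gpdf_nonneg)

lemma one_sub_gcdf (x : ℝ) : 1 - gcdf x = ∫ t in Set.Ioi x, gpdf t := by
  have h := intervalIntegral.integral_Iio_add_Ici (f := gpdf) (b := x) (μ := volume)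
    integrable_gpdf.integrableOn integrable_gpdf.integrableOn
  rw [integral_gpdf] at h
  rw [← gcdf_eq] at h
  rw [← h, MeasureTheory.integral_Ici_eq_integral_Ioi]
  ring

lemma hasDerivAt_gcdf (x : ℝ) : HasDerivAt gcdf (gpdf x) x := by
  have key : ∀ y : ℝ, gcdf y = gcdf 0 + ∫ t in (0:ℝ)..y, gpdf t := by
    intro y
    have := intervalIntegral.integral_Iic_sub_Iic (f := gpdf) (μ := volume) (a := (0:ℝ)) (b := y)
      integrable_gpdf.integrableOn integrable_gpdf.integrableOn
    have hIic : ∀ z : ℝ, ∫ t in Set.Iic z, gpdf t = gcdf z := by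
      intro z
      rw [gcdf_eq]; exact MeasureTheory.integral_Iic_eq_integral_Iio
    rw [hIic, hIic] at this
    linarith
  have cont : Continuous gpdf := by
    unfold gpdf
    continuity
  have h : HasDerivAt (fun y => gcdf 0 + ∫ t in (0:ℝ)..y, gpdf t) (gpdf x) x := by
    apply HasDerivAt.const_add
    exact intervalIntegral.integral_hasDerivAt_right
      (integrable_gpdf.intervalIntegrable)
      (cont.aestronglyMeasurable.stronglyMeasurableAtFilter)
      cont.continuousAt
  exact h.congr_deriv rfl |>.congr_of_eventuallyEq (Filter.Eventually.of_forall fun y => (key y))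

lemma gpdf_le_half (t : ℝ) : gpdf t ≤ 1/2 := by
  unfold gpdf
  have h1 : Real.exp (-t ^ 2 / 2) ≤ 1 := by
    rw [Real.exp_le_one_iff]; nlinarith [sq_nonneg t]
  have h2 : (2:ℝ) ≤ Real.sqrt (2 * Real.pi) := by
    have h4 : (2:ℝ)^2 ≤ 2 * Real.pi := by nlinarith [Real.pi_gt_three]
    nlinarith [Real.sq_sqrt (show (0:ℝ) ≤ 2*Real.pi by positivity),
      Real.sqrt_nonneg (2*Real.pi)]
  have h3 : (1:ℝ) / Real.sqrt (2 * Real.pi) ≤ 1/2 := by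
    rw [div_le_div_iff₀ (by linarith) (by norm_num)]; linarith
  calc 1 / Real.sqrt (2 * Real.pi) * Real.exp (-t ^ 2 / 2) ≤ 1 / Real.sqrt (2 * Real.pi) * 1 :=
        mul_le_mul_of_nonneg_left h1 (by positivity)
    _ ≤ 1/2 := by rw [mul_one]; exact h3

lemma gcdf_zero : gcdf 0 = 1/2 := by
  have hsymm : ∫ t in Set.Iic (0:ℝ), gpdf t = ∫ t in Set.Ioi (0:ℝ), gpdf t := by
    have h := integral_comp_neg_Ioi (0:ℝ) gpdf
    rw [neg_zero] at h
    rw [← h]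
    apply setIntegral_congr_fun measurableSet_Ioi
    intro x _
    unfold gpdf
    simp only []
    rw [show (-x)^2 = x^2 by ring]
  have h := intervalIntegral.integral_Iio_add_Ici (f := gpdf) (b := (0:ℝ)) (μ := volume)
    integrable_gpdf.integrableOn integrable_gpdf.integrableOn
  rw [integral_gpdf] at h
  have hIio : ∫ t in Set.Iio (0:ℝ), gpdf t = ∫ t in Set.Ioi (0:ℝ), gpdf t := by
    rw [← MeasureTheory.integral_Iic_eq_integral_Iio]; exact hsymm
  have hIci : ∫ t in Set.Ici (0:ℝ), gpdf t = ∫ t in Set.Ioi (0:ℝ), gpdf t :=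
    MeasureTheory.integral_Ici_eq_integral_Ioi
  rw [gcdf_eq]
  rw [hIci, hIio] at h
  linarith

lemma mills (t : ℝ) (ht : 0 ≤ t) : gpdf t ≤ 9 * (1 + t) * (1 - gcdf t) := by
  set δ : ℝ := 1/(1+t) with hδ
  have hδpos : 0 < δ := by positivity
  have hδle : δ ≤ 1 := by rw [hδ, div_le_one (by linarith)]; linarith
  have htδ : t * δ ≤ 1 := by
    rw [hδ, mul_one_div, div_le_one (by linarith)]; linarith
  set c : ℝ := (1 / Real.sqrt (2 * Real.pi)) * Real.exp (-(t+δ) ^ 2 / 2) with hc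
  have hcpos : 0 ≤ c := by
    have : (0:ℝ) ≤ 1 / Real.sqrt (2 * Real.pi) := by positivity
    exact mul_nonneg this (Real.exp_pos _).le
  -- integral over Ioc t (t+δ) is at least δ * c
  have h1 : δ * c ≤ ∫ s in Set.Ioc t (t+δ), gpdf s := by
    have hconst : ∫ _s in Set.Ioc t (t+δ), c = δ * c := by
      rw [setIntegral_const, measureReal_def, Real.volume_Ioc, ENNReal.toReal_ofReal (by linarith), smul_eq_mul]
      ring_nf
    rw [← hconst]
    apply setIntegral_mono_on (integrableOn_const (by simp [Real.volume_Ioc]))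
      integrable_gpdf.integrableOn measurableSet_Ioc
    intro s hs
    rw [hc]
    unfold gpdf
    apply mul_le_mul_of_nonneg_left _ (by positivity)
    apply Real.exp_le_exp.2
    have h2 : s ≤ t + δ := hs.2
    have h3 : 0 ≤ s := le_trans ht hs.1.le
    nlinarith
  have h2 : ∫ s in Set.Ioc t (t+δ), gpdf s ≤ ∫ s in Set.Ioi t, gpdf s :=
    setIntegral_mono_set integrable_gpdf.integrableOn
      (Filter.Eventually.of_forall gpdf_nonneg)
      (HasSubset.Subset.eventuallyLE Set.Ioc_subset_Ioi_self)
  have h3 : gpdf t * Real.exp (-(3:ℝ)/2) ≤ c := by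
    rw [hc]; unfold gpdf
    rw [mul_assoc, ← Real.exp_add]
    apply mul_le_mul_of_nonneg_left _ (by positivity)
    apply Real.exp_le_exp.2
    nlinarith [sq_nonneg δ, sq_nonneg (t+δ)]
  have h4 : (1:ℝ)/9 ≤ Real.exp (-(3:ℝ)/2) := by
    rw [show -(3:ℝ)/2 = -(3/2) by ring, Real.exp_neg,
      show (1:ℝ)/9 = 9⁻¹ by norm_num, inv_le_inv₀ (by norm_num) (Real.exp_pos _)]
    calc Real.exp (3/2 : ℝ) ≤ Real.exp 2 := Real.exp_le_exp.2 (by norm_num)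
      _ ≤ 9 := by nlinarith [Real.exp_one_lt_d9, Real.exp_pos 1,
          Real.exp_add 1 1, Real.exp_le_exp.2 (show (2:ℝ) ≤ 1 + 1 by norm_num)]
  have h5 : 1 - gcdf t = ∫ s in Set.Ioi t, gpdf s := one_sub_gcdf t
  have h6 : δ * (gpdf t * (1/9)) ≤ 1 - gcdf t := by
    rw [h5]
    calc δ * (gpdf t * (1/9)) ≤ δ * (gpdf t * Real.exp (-(3:ℝ)/2)) := by
          apply mul_le_mul_of_nonneg_left _ hδpos.le
          exact mul_le_mul_of_nonneg_left h4 (gpdf_nonneg t)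
      _ ≤ δ * c := mul_le_mul_of_nonneg_left h3 hδpos.le
      _ ≤ _ := le_trans h1 h2
  have h7 : gpdf t ≤ 9 * (1/δ) * (1 - gcdf t) := by
    have h9 := mul_le_mul_of_nonneg_left h6 (show (0:ℝ) ≤ 9*(1/δ) by positivity)
    calc gpdf t = 9*(1/δ)*(δ*(gpdf t*(1/9))) := by field_simp
      _ ≤ _ := h9
  have h8 : (1:ℝ)/δ = 1 + t := by rw [hδ]; field_simp
  rw [h8] at h7; linarith

/-- The k-variate Bentkus mollifier `G(x) = ∏ᵢ g(xᵢ)`. -/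
noncomputable def bentkusG (k : ℕ) (x : Fin k → ℝ) : ℝ := ∏ i, gcdf (x i)

/-- The `i`-th partial derivative of `G` at `x`. -/
noncomputable def bentkusPartial (k : ℕ) (i : Fin k) (x : Fin k → ℝ) : ℝ :=
  deriv (fun t => bentkusG k (Function.update x i t)) (x i)

lemma bentkusPartial_eq (k : ℕ) (i : Fin k) (x : Fin k → ℝ) :
    bentkusPartial k i x = gpdf (x i) * ∏ j ∈ Finset.univ.erase i, gcdf (x j) := by
  have hfun : (fun t => bentkusG k (Function.update x i t)) =
      fun t => gcdf t * ∏ j ∈ Finset.univ.erase i, gcdf (x j) := by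
    funext t
    unfold bentkusG
    have h1 : (fun j => gcdf (Function.update x i t j)) =
        Function.update (fun j => gcdf (x j)) i (gcdf t) := by
      funext j
      exact Function.apply_update (fun _ v => gcdf v) x i t j
    calc ∏ j, gcdf (Function.update x i t j)
        = ∏ j, Function.update (fun j => gcdf (x j)) i (gcdf t) j := by rw [h1]
      _ = gcdf t * ∏ j ∈ Finset.univ \ {i}, gcdf (x j) :=
          Finset.prod_update_of_mem (Finset.mem_univ i) _ _
      _ = gcdf t * ∏ j ∈ Finset.univ.erase i, gcdf (x j) := by
          rw [← Finset.sdiff_singleton_eq_erase]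
  unfold bentkusPartial
  rw [hfun]
  exact (((hasDerivAt_gcdf (x i)).mul_const _)).deriv

lemma bentkusPartial_nonneg (k : ℕ) (i : Fin k) (x : Fin k → ℝ) :
    0 ≤ bentkusPartial k i x := by
  rw [bentkusPartial_eq]
  exact mul_nonneg (gpdf_nonneg _) (Finset.prod_nonneg fun j _ => gcdf_nonneg _)

lemma prod_erase_le {k : ℕ} (x : Fin k → ℝ) (A : Finset (Fin k)) (i : Fin k) :
    ∏ j ∈ Finset.univ.erase i, gcdf (x j) ≤ ∏ j ∈ A.erase i, gcdf (x j) := by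
  have hsub : A.erase i ⊆ Finset.univ.erase i :=
    Finset.erase_subset_erase _ (Finset.subset_univ A)
  rw [← Finset.prod_sdiff hsub]
  have h1 : ∏ j ∈ (Finset.univ.erase i) \ (A.erase i), gcdf (x j) ≤ 1 :=
    Finset.prod_le_one (fun j _ => gcdf_nonneg _) (fun j _ => gcdf_le_one _)
  have h2 : 0 ≤ ∏ j ∈ A.erase i, gcdf (x j) := Finset.prod_nonneg fun j _ => gcdf_nonneg _
  exact mul_le_of_le_one_left h2 h1


lemma final_arith (kR T L : ℝ) (hk1 : 1 ≤ kR) (hT0 : 0 ≤ T)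
    (hTsq : T ^ 2 = 2 * Real.log kR) (hL : L = Real.sqrt (Real.log (kR + 1))) :
    1 + (18 * (1 + T) + 1) ≤ 60 * L := by
  have hL0 : 0 ≤ L := hL ▸ Real.sqrt_nonneg _
  have hlog1 : 0 ≤ Real.log (kR + 1) := Real.log_nonneg (by linarith)
  have hLsq : L ^ 2 = Real.log (kR + 1) := by rw [hL]; exact Real.sq_sqrt hlog1
  have hlog2 : Real.log 2 ≤ Real.log (kR + 1) :=
    Real.log_le_log (by norm_num) (by linarith)
  have hL8 : (4:ℝ)/5 ≤ L := by
    have h2 : (16:ℝ)/25 ≤ Real.log (kR+1) := by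
      nlinarith [Real.log_two_gt_d9]
    nlinarith
  have hTL : T ≤ (3/2) * L := by
    have h2 : Real.log kR ≤ Real.log (kR+1) :=
      Real.log_le_log (by linarith) (by linarith)
    have h1 : T^2 ≤ ((3/2) * L)^2 := by
      have h3 : ((3/2)*L)^2 = (9/4) * Real.log (kR+1) := by
        rw [mul_pow, hLsq]; norm_num
      rw [hTsq, h3]
      linarith
    calc T = Real.sqrt (T^2) := (Real.sqrt_sq hT0).symm
      _ ≤ Real.sqrt (((3/2) * L)^2) := Real.sqrt_le_sqrt h1
      _ = (3/2) * L := Real.sqrt_sq (by positivity)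
  linarith

/-- Bentkus: `sup_x Σᵢ |∂ᵢG(x)| ≤ C·√(log(k+1))` for a universal constant `C`. -/
theorem bentkus_first_derivative_bound :
    ∃ C : ℝ, 0 < C ∧ ∀ (k : ℕ) (x : Fin k → ℝ),
      ∑ i, |bentkusPartial k i x| ≤ C * Real.sqrt (Real.log (k + 1)) := by
  classical
  refine ⟨60, by norm_num, ?_⟩
  intro k x
  rcases Nat.eq_zero_or_pos k with hk | hk
  · subst hk
    simp [Real.log_one]
  have hk1 : (1:ℝ) ≤ (k:ℝ) := by exact_mod_cast hk
  set T := Real.sqrt (2 * Real.log k) with hT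
  have hlogk : 0 ≤ Real.log k := Real.log_nonneg hk1
  have hT0 : 0 ≤ T := Real.sqrt_nonneg _
  have hTsq : T ^ 2 = 2 * Real.log k := Real.sq_sqrt (by linarith)
  set f : Fin k → ℝ := fun i => gpdf (x i) * ∏ j ∈ Finset.univ.erase i, gcdf (x j) with hf
  have hf_nonneg : ∀ i, 0 ≤ f i := fun i =>
    mul_nonneg (gpdf_nonneg _) (Finset.prod_nonneg fun j _ => gcdf_nonneg _)
  have hrw : ∑ i, |bentkusPartial k i x| = ∑ i, f i := by
    apply Finset.sum_congr rfl
    intro i _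
    rw [abs_of_nonneg (bentkusPartial_nonneg k i x), bentkusPartial_eq]
  rw [hrw]
  set A : Finset (Fin k) := Finset.univ.filter (fun i => x i < 0) with hA
  set B : Finset (Fin k) := Finset.univ.filter (fun i => ¬ x i < 0) with hB
  set M : Finset (Fin k) := B.filter (fun i => x i ≤ T) with hM
  set H : Finset (Fin k) := B.filter (fun i => ¬ x i ≤ T) with hH
  have hsplit : ∑ i, f i = (∑ i ∈ A, f i) + ((∑ i ∈ M, f i) + (∑ i ∈ H, f i)) := by
    rw [← Finset.sum_filter_add_sum_filter_not Finset.univ (fun i => x i < 0) f,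
      ← Finset.sum_filter_add_sum_filter_not B (fun i => x i ≤ T) f]
  -- Bound on A (negative coordinates)
  have hbA : ∑ i ∈ A, f i ≤ 1 := by
    have hterm : ∀ i ∈ A, f i ≤ (1/2) * (1/2)^(A.card - 1) := by
      intro i hi
      have hxi : x i < 0 := (Finset.mem_filter.1 hi).2
      have hprod : ∏ j ∈ Finset.univ.erase i, gcdf (x j) ≤ (1/2)^(A.card - 1) := by
        calc ∏ j ∈ Finset.univ.erase i, gcdf (x j)
            ≤ ∏ j ∈ A.erase i, gcdf (x j) := prod_erase_le x A i
          _ ≤ ∏ _j ∈ A.erase i, (1/2 : ℝ) := by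
              apply Finset.prod_le_prod (fun j _ => gcdf_nonneg _)
              intro j hj
              have hxj : x j < 0 := (Finset.mem_filter.1 (Finset.mem_of_mem_erase hj)).2
              calc gcdf (x j) ≤ gcdf 0 := gcdf_mono hxj.le
                _ = 1/2 := gcdf_zero
          _ = (1/2 : ℝ)^(A.erase i).card := by rw [Finset.prod_const]
          _ = (1/2 : ℝ)^(A.card - 1) := by rw [Finset.card_erase_of_mem hi]
      calc f i ≤ (1/2) * ∏ j ∈ Finset.univ.erase i, gcdf (x j) :=
            mul_le_mul_of_nonneg_right (gpdf_le_half _)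
              (Finset.prod_nonneg fun j _ => gcdf_nonneg _)
        _ ≤ (1/2) * (1/2)^(A.card - 1) := by linarith
    have hsum := Finset.sum_le_card_nsmul A f _ hterm
    rw [nsmul_eq_mul] at hsum
    refine le_trans hsum ?_
    rcases Nat.eq_zero_or_pos A.card with h0 | h1
    · rw [h0]; norm_num
    · have : (1/2 : ℝ) * (1/2)^(A.card - 1) = (1/2)^A.card := by
        rw [← pow_succ']
        congr 1
        omega
      rw [this]
      have hcard : (A.card : ℝ) ≤ 2 ^ A.card := by
        exact_mod_cast (Nat.lt_two_pow_self (n := A.card)).le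
      rw [div_pow, one_pow, div_eq_mul_inv, ← mul_assoc, mul_one]
      rw [← div_eq_mul_inv, div_le_one (by positivity)]
      exact hcard
  -- Bound on H (large coordinates)
  have hbH : ∑ i ∈ H, f i ≤ 1 := by
    have hterm : ∀ i ∈ H, f i ≤ 1/(2*k) := by
      intro i hi
      have hxi : T < x i := by
        have := (Finset.mem_filter.1 hi).2
        exact not_le.1 this
      have hprod : ∏ j ∈ Finset.univ.erase i, gcdf (x j) ≤ 1 :=
        Finset.prod_le_one (fun j _ => gcdf_nonneg _) (fun j _ => gcdf_le_one _)
      have hgp : gpdf (x i) ≤ 1/(2*k) := by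
        unfold gpdf
        have hc : (1:ℝ) / Real.sqrt (2 * Real.pi) ≤ 1/2 := by
          have h4 : (2:ℝ)^2 ≤ 2 * Real.pi := by nlinarith [Real.pi_gt_three]
          have h2 : (2:ℝ) ≤ Real.sqrt (2 * Real.pi) := by
            nlinarith [Real.sq_sqrt (show (0:ℝ) ≤ 2*Real.pi by positivity),
              Real.sqrt_nonneg (2*Real.pi)]
          rw [div_le_div_iff₀ (by linarith) (by norm_num)]; linarith
        have hexp : Real.exp (-(x i)^2/2) ≤ 1/(k:ℝ) := by
          have h1 : Real.exp (-(x i)^2/2) ≤ Real.exp (-Real.log k) := by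
            apply Real.exp_le_exp.2
            have : T^2 ≤ (x i)^2 := by nlinarith
            rw [hTsq] at this
            linarith
          rw [Real.exp_neg, Real.exp_log (by linarith)] at h1
          rw [one_div]
          exact h1
        calc 1 / Real.sqrt (2 * Real.pi) * Real.exp (-(x i)^2/2)
            ≤ (1/2) * (1/(k:ℝ)) := by
              apply mul_le_mul hc hexp (Real.exp_pos _).le (by norm_num)
          _ = 1/(2*k) := by field_simp
      calc f i ≤ gpdf (x i) * 1 := mul_le_mul_of_nonneg_left hprod (gpdf_nonneg _)
        _ = gpdf (x i) := mul_one _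
        _ ≤ 1/(2*k) := hgp
    have hsum := Finset.sum_le_card_nsmul H f _ hterm
    rw [nsmul_eq_mul] at hsum
    refine le_trans hsum ?_
    have hcard : (H.card : ℝ) ≤ (k:ℝ) := by
      have : H.card ≤ Fintype.card (Fin k) := Finset.card_le_univ H
      rw [Fintype.card_fin] at this
      exact_mod_cast this
    calc (H.card : ℝ) * (1/(2*k)) ≤ (k:ℝ) * (1/(2*k)) := by
          apply mul_le_mul_of_nonneg_right hcard (by positivity)
      _ = 1/2 := by field_simp
      _ ≤ 1 := by norm_num
  -- Bound on M (middle coordinates)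
  have hbM : ∑ i ∈ M, f i ≤ 18 * (1 + T) := by
    set s : ℝ := ∑ j ∈ M, (1 - gcdf (x j)) with hs
    have hs0 : 0 ≤ s := Finset.sum_nonneg fun j _ => by linarith [gcdf_le_one (x j)]
    have hterm : ∀ i ∈ M, f i ≤ 18 * (1 + T) * Real.exp (-s) * (1 - gcdf (x i)) := by
      intro i hi
      obtain ⟨hiB, hxiT⟩ := Finset.mem_filter.1 hi
      have hxi0 : 0 ≤ x i := not_lt.1 (Finset.mem_filter.1 hiB).2
      have hui : (1:ℝ)/2 ≤ gcdf (x i) := by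
        rw [← gcdf_zero]; exact gcdf_mono hxi0
      have hsi : 1 - gcdf (x i) ≤ 1/2 := by linarith
      have hsi0 : 0 ≤ 1 - gcdf (x i) := by linarith [gcdf_le_one (x i)]
      -- product bound
      have hprod : ∏ j ∈ Finset.univ.erase i, gcdf (x j) ≤
          Real.exp (1 - gcdf (x i)) * Real.exp (-s) := by
        calc ∏ j ∈ Finset.univ.erase i, gcdf (x j)
            ≤ ∏ j ∈ M.erase i, gcdf (x j) := prod_erase_le x M i
          _ ≤ ∏ j ∈ M.erase i, Real.exp (gcdf (x j) - 1) := by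
              apply Finset.prod_le_prod (fun j _ => gcdf_nonneg _)
              intro j _
              have := Real.add_one_le_exp (gcdf (x j) - 1)
              linarith
          _ = Real.exp (∑ j ∈ M.erase i, (gcdf (x j) - 1)) := (Real.exp_sum _ _).symm
          _ = Real.exp (1 - gcdf (x i)) * Real.exp (-s) := by
              rw [← Real.exp_add]
              congr 1
              have herase : ∑ j ∈ M.erase i, (1 - gcdf (x j)) = s - (1 - gcdf (x i)) := by
                rw [hs, ← Finset.add_sum_erase M _ hi]
                ring
              have : ∑ j ∈ M.erase i, (gcdf (x j) - 1) =
                  - ∑ j ∈ M.erase i, (1 - gcdf (x j)) := by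
                rw [← Finset.sum_neg_distrib]
                apply Finset.sum_congr rfl
                intro j _; ring
              rw [this, herase]
              ring
      have hexpsi : Real.exp (1 - gcdf (x i)) ≤ 2 := by
        have h1 : Real.exp (1 - gcdf (x i)) ≤ Real.exp (1/2) := Real.exp_le_exp.2 hsi
        have h2 : Real.exp (1/2 : ℝ) * Real.exp (1/2 : ℝ) = Real.exp 1 := by
          rw [← Real.exp_add]; norm_num
        nlinarith [Real.exp_one_lt_d9, Real.exp_pos (1/2 : ℝ)]
      have hgp : gpdf (x i) ≤ 9 * (1 + T) * (1 - gcdf (x i)) := by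
        calc gpdf (x i) ≤ 9 * (1 + x i) * (1 - gcdf (x i)) := mills (x i) hxi0
          _ ≤ 9 * (1 + T) * (1 - gcdf (x i)) := by nlinarith
      calc f i ≤ (9 * (1 + T) * (1 - gcdf (x i))) * ∏ j ∈ Finset.univ.erase i, gcdf (x j) := by
            apply mul_le_mul_of_nonneg_right hgp
              (Finset.prod_nonneg fun j _ => gcdf_nonneg _)
        _ ≤ (9 * (1 + T) * (1 - gcdf (x i))) * (Real.exp (1 - gcdf (x i)) * Real.exp (-s)) := by
            apply mul_le_mul_of_nonneg_left hprod
            positivity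
        _ ≤ (9 * (1 + T) * (1 - gcdf (x i))) * (2 * Real.exp (-s)) := by
            apply mul_le_mul_of_nonneg_left _ (by positivity)
            apply mul_le_mul_of_nonneg_right hexpsi (Real.exp_pos _).le
        _ = 18 * (1 + T) * Real.exp (-s) * (1 - gcdf (x i)) := by ring
    have hsum : ∑ i ∈ M, f i ≤ 18 * (1 + T) * Real.exp (-s) * s := by
      calc ∑ i ∈ M, f i ≤ ∑ i ∈ M, 18 * (1 + T) * Real.exp (-s) * (1 - gcdf (x i)) :=
            Finset.sum_le_sum hterm
        _ = 18 * (1 + T) * Real.exp (-s) * s := by rw [← Finset.mul_sum, hs]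
    have hse : Real.exp (-s) * s ≤ 1 := by
      have h1 : s ≤ Real.exp s := by linarith [Real.add_one_le_exp s]
      have h2 : Real.exp (-s) * s ≤ Real.exp (-s) * Real.exp s :=
        mul_le_mul_of_nonneg_left h1 (Real.exp_pos _).le
      rw [← Real.exp_add] at h2
      simpa using h2
    calc ∑ i ∈ M, f i ≤ 18 * (1 + T) * Real.exp (-s) * s := hsum
      _ = 18 * (1 + T) * (Real.exp (-s) * s) := by ring
      _ ≤ 18 * (1 + T) * 1 := by
          apply mul_le_mul_of_nonneg_left hse (by positivity)
      _ = 18 * (1 + T) := mul_one _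
  -- Final arithmetic
  have hfin := final_arith (k:ℝ) T (Real.sqrt (Real.log ((k:ℝ) + 1))) hk1 hT0 hTsq rfl
  rw [hsplit]
  push_cast
  linarith
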